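/- (π/8) · ∑_{n=1}^∞ (−1)^{n−1}/n³ = ∫₀¹ ((arsinh x)² · arccos x)/x dx, where the integral is taken over the real interval [0,1]. -/

import Mathlib

/-
Expand `arsinh² x = ∑ₖ cₖ x^(2k+2)` and integrate term by term against `arccos x / x`.
The series comes from `arsinh x / √(1 + x²) = ∑ₖ dₖ x^(2k+1)`, the solution of
`(1 + x²) y' + x y = 1` with `y 0 = 0`, whose coefficients satisfy `(2k+3) dₖ₊₁ = -(2k+2) dₖ`;
then `cₖ = dₖ / (k + 1)`. Substituting `x = cos θ` and integrating by parts turns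
`∫₀¹ x^(2k+1) arccos x dx` into the Wallis integral `∫₀^{π/2} cos^(2k+2) θ dθ / (2k+2)`, whose
Wallis product cancels the one in `cₖ`, leaving `π (-1)^k / (8 (k+1)³)`. All these moments
are nonnegative, so the same computation shows absolute convergence and justifies the interchange.
-/

open Real Set MeasureTheory Function

-- `wallisProd n = (2n choose n) / 4 ^ n`
noncomputable def wallisProd (n : ℕ) : ℝ := ∏ i ∈ Finset.range n, (2 * (i : ℝ) + 1) / (2 * i + 2)

lemma wallisProd_pos (n : ℕ) : 0 < wallisProd n :=
  Finset.prod_pos fun i _ => by positivity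

lemma wallisProd_succ (n : ℕ) :
    wallisProd (n + 1) = wallisProd n * ((2 * n + 1) / (2 * n + 2)) :=
  Finset.prod_range_succ _ n

lemma one_le_mul_wallisProd (n : ℕ) : 1 ≤ (2 * n + 1) * wallisProd n := by
  induction n with
  | zero => simp [wallisProd]
  | succ k ih =>
    rw [wallisProd_succ]
    have hk : (0 : ℝ) < 2 * k + 2 := by positivity
    have hW := wallisProd_pos k
    push_cast
    rw [mul_div_assoc', mul_div_assoc', le_div_iff₀ hk]
    nlinarith

lemma integral_cos_pow_two_mul (n : ℕ) :
    ∫ θ in (0 : ℝ)..(π / 2), cos θ ^ (2 * n) = π / 2 * wallisProd n := by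
  induction n with
  | zero => simp [wallisProd]
  | succ k ih =>
    rw [mul_add_one, integral_cos_pow, ih, cos_pi_div_two, wallisProd_succ]
    simp only [ne_eq, AddLeftCancelMonoid.add_eq_zero, one_ne_zero, and_false,
      not_false_eq_true, zero_pow, zero_mul, sin_zero, mul_zero, sub_self, zero_div, zero_add]
    push_cast
    ring

lemma integral_pow_mul_arccos (n : ℕ) :
    ∫ x in (0 : ℝ)..1, x ^ n * arccos x =
      (∫ θ in (0 : ℝ)..(π / 2), cos θ ^ (n + 1)) / (n + 1) := by
  have hsubst : ∫ x in (0 : ℝ)..1, x ^ n * arccos x =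
      ∫ θ in (0 : ℝ)..(π / 2), θ * (cos θ ^ n * sin θ) := by
    have h := intervalIntegral.integral_comp_mul_deriv (a := 0) (b := π / 2)
      (fun θ _ => hasDerivAt_cos θ) continuous_sin.neg.continuousOn
      (show Continuous fun x : ℝ => x ^ n * arccos x by fun_prop)
    rw [cos_zero, cos_pi_div_two] at h
    rw [intervalIntegral.integral_symm, ← h, ← intervalIntegral.integral_neg]
    refine intervalIntegral.integral_congr fun θ hθ => ?_
    rw [uIcc_of_le (by positivity)] at hθ
    simp only [Function.comp, arccos_cos hθ.1 (hθ.2.trans (by linarith [pi_pos]))]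
    ring
  have hv : ∀ θ ∈ uIcc (0 : ℝ) (π / 2),
      HasDerivAt (fun θ => -(cos θ ^ (n + 1) / (n + 1))) (cos θ ^ n * sin θ) θ := by
    intro θ _
    refine (((hasDerivAt_cos θ).fun_pow (n + 1)).div_const ((n : ℝ) + 1)).fun_neg.congr_deriv
      ?_
    rw [Nat.add_sub_cancel]
    push_cast
    field_simp
  rw [hsubst, intervalIntegral.integral_mul_deriv_eq_deriv_mul (fun θ _ => hasDerivAt_id' θ) hv
    intervalIntegrable_const (by apply Continuous.intervalIntegrable; fun_prop)]
  simp only [cos_pi_div_two, ne_eq, Nat.add_eq_zero_iff, one_ne_zero, and_false,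
    not_false_eq_true, zero_pow, zero_div, neg_zero, mul_zero, one_mul,
    intervalIntegral.integral_neg, intervalIntegral.integral_div]
  ring

lemma summable_nat_mul_pow_sub_one {r : ℝ} (hr : |r| < 1) :
    Summable fun n : ℕ => (n : ℝ) * r ^ (n - 1) := by
  rw [← summable_nat_add_iff 1]
  have h := summable_pow_mul_geometric_of_norm_lt_one 1 (show ‖r‖ < 1 by rwa [norm_eq_abs])
  refine (h.add (summable_geometric_of_abs_lt_one hr)).congr fun n => ?_
  simp only [pow_one, Nat.cast_add, Nat.cast_one, Nat.add_sub_cancel]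
  ring

section PowerSeries

variable {a : ℕ → ℝ} {C : ℝ} {e : ℕ → ℕ}

lemma summable_mul_pow_comp (ha : ∀ k, |a k| ≤ C) (he : Injective e) {x : ℝ} (hx : |x| < 1) :
    Summable fun k => a k * x ^ e k := by
  refine .of_norm_bounded
    (((summable_geometric_of_lt_one (abs_nonneg x) hx).comp_injective he).mul_left C) fun k => ?_
  rw [norm_mul, norm_pow, norm_eq_abs, norm_eq_abs]
  exact mul_le_mul_of_nonneg_right (ha k) (by positivity)

lemma norm_mul_nat_mul_pow_le (ha : ∀ k, |a k| ≤ C) {y r : ℝ} (hy : |y| ≤ r) (k : ℕ) :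
    ‖a k * (e k * y ^ (e k - 1))‖ ≤ C * (e k * r ^ (e k - 1)) := by
  rw [norm_mul, norm_mul, norm_pow, Real.norm_natCast, norm_eq_abs, norm_eq_abs]
  gcongr
  exacts [(abs_nonneg _).trans (ha k), ha k]

lemma summable_mul_nat_mul_pow_comp (ha : ∀ k, |a k| ≤ C) (he : Injective e) {x : ℝ}
    (hx : |x| < 1) : Summable fun k => a k * (e k * x ^ (e k - 1)) := by
  have hx' : |(|x|)| < 1 := by rwa [abs_abs]
  exact .of_norm_bounded (((summable_nat_mul_pow_sub_one hx').comp_injective he).mul_left C)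
    (norm_mul_nat_mul_pow_le ha le_rfl)

lemma hasDerivAt_tsum_mul_pow_comp (ha : ∀ k, |a k| ≤ C) (he : Injective e) {x : ℝ}
    (hx : |x| < 1) :
    HasDerivAt (fun y => ∑' k, a k * y ^ e k) (∑' k, a k * (e k * x ^ (e k - 1))) x := by
  obtain ⟨r, hxr, hr1⟩ := exists_between hx
  have hr : |r| < 1 := by rwa [abs_of_nonneg ((abs_nonneg x).trans hxr.le)]
  exact hasDerivAt_tsum_of_isPreconnected
    (((summable_nat_mul_pow_sub_one hr).comp_injective he).mul_left C) isOpen_Ioo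
    isPreconnected_Ioo (fun k y _ => (hasDerivAt_pow (e k) y).const_mul (a k))
    (fun k y hy => norm_mul_nat_mul_pow_le ha (abs_lt.2 hy).le k)
    (show (0 : ℝ) ∈ Ioo (-r) r by constructor <;> linarith [abs_nonneg x])
    (summable_mul_pow_comp ha he (by simp)) (abs_lt.1 hxr)

end PowerSeries

lemma injective_two_mul_add (m : ℕ) : Injective fun k : ℕ => 2 * k + m :=
  fun _ _ h => by simp only at h; omega

theorem IsOpen.eqOn_of_hasDerivAt {𝕜 G : Type*} [RCLike 𝕜]
    [NormedAddCommGroup G] [NormedSpace 𝕜 G] {s : Set 𝕜} (hs : IsOpen s) (hs' : IsPreconnected s)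
    {f g f' : 𝕜 → G} (hf : ∀ x ∈ s, HasDerivAt f (f' x) x) (hg : ∀ x ∈ s, HasDerivAt g (f' x) x)
    {c : 𝕜} (hc : c ∈ s) (hfg : f c = g c) : EqOn f g s :=
  hs.eqOn_of_deriv_eq hs' (fun x hx => (hf x hx).differentiableAt.differentiableWithinAt)
    (fun x hx => (hg x hx).differentiableAt.differentiableWithinAt)
    (fun x hx => (hf x hx).deriv.trans (hg x hx).deriv.symm) hc hfg

lemma hasDerivAt_sqrt_one_add_sq (x : ℝ) :
    HasDerivAt (fun y => √(1 + y ^ 2)) (x / √(1 + x ^ 2)) x := by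
  refine (((hasDerivAt_pow 2 x).const_add 1).sqrt (by positivity)).congr_deriv ?_
  field_simp
  norm_num

theorem intervalIntegral.integral_tsum_mul_of_nonneg {a b : ℝ} (hab : a ≤ b) {c : ℕ → ℝ}
    {f : ℕ → ℝ → ℝ} (hf : ∀ k, IntervalIntegrable (f k) volume a b)
    (hf₀ : ∀ k, ∀ x ∈ Ioc a b, 0 ≤ f k x)
    (hsum : Summable fun k => |c k| * ∫ x in a..b, f k x) :
    ∫ x in a..b, ∑' k, c k * f k x = ∑' k, c k * ∫ x in a..b, f k x := by
  have hnorm (k : ℕ) : ∫ x in Ioc a b, ‖c k * f k x‖ = |c k| * ∫ x in a..b, f k x := by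
    rw [integral_of_le hab, ← MeasureTheory.integral_const_mul]
    refine setIntegral_congr_fun measurableSet_Ioc fun x hx => ?_
    rw [norm_mul, norm_eq_abs, norm_eq_abs, abs_of_nonneg (hf₀ k x hx)]
  calc ∫ x in a..b, ∑' k, c k * f k x
      = ∫ x in Ioc a b, ∑' k, c k * f k x := integral_of_le hab
    _ = ∑' k, ∫ x in Ioc a b, c k * f k x :=
        (integral_tsum_of_summable_integral_norm (fun k => ((hf k).1).const_mul (c k))
          (hsum.congr fun k => (hnorm k).symm)).symm
    _ = ∑' k, c k * ∫ x in a..b, f k x :=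
        tsum_congr fun k => by rw [MeasureTheory.integral_const_mul, integral_of_le hab]

noncomputable def arsinhCoeff (k : ℕ) : ℝ := (-1) ^ k / ((2 * k + 1) * wallisProd k)

lemma arsinhCoeff_zero : arsinhCoeff 0 = 1 := by
  simp [arsinhCoeff, wallisProd]

lemma abs_arsinhCoeff_le_one (k : ℕ) : |arsinhCoeff k| ≤ 1 := by
  have hW := wallisProd_pos k
  rw [arsinhCoeff, abs_div, abs_pow, abs_neg, abs_one, one_pow, abs_of_pos (by positivity),
    div_le_one (by positivity)]
  exact one_le_mul_wallisProd k

lemma abs_arsinhCoeff_div_le_one (k : ℕ) : |arsinhCoeff k / (k + 1)| ≤ 1 := by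
  rw [abs_div, abs_of_pos (by positivity : (0 : ℝ) < k + 1), div_le_one (by positivity)]
  linarith [abs_arsinhCoeff_le_one k, (k.cast_nonneg : (0 : ℝ) ≤ k)]

lemma arsinhCoeff_succ (k : ℕ) :
    (2 * k + 3) * arsinhCoeff (k + 1) = -((2 * k + 2) * arsinhCoeff k) := by
  have hW := wallisProd_pos k
  rw [arsinhCoeff, arsinhCoeff, wallisProd_succ, pow_succ]
  push_cast
  field_simp
  ring

lemma one_add_sq_mul_tsum_add_mul_tsum_eq_one {x : ℝ} (hx : |x| < 1) :
    (1 + x ^ 2) * ∑' k, arsinhCoeff k * ((2 * k + 1) * x ^ (2 * k)) +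
      x * ∑' k, arsinhCoeff k * x ^ (2 * k + 1) = 1 := by
  set b := fun k : ℕ => arsinhCoeff k * ((2 * k + 1) * x ^ (2 * k))
  have hb : Summable b := by
    simpa using summable_mul_nat_mul_pow_comp abs_arsinhCoeff_le_one (injective_two_mul_add 1) hx
  have hP := summable_mul_pow_comp abs_arsinhCoeff_le_one (injective_two_mul_add 1) hx
  -- `b k` are the terms of `P'` for `P x = ∑ₖ dₖ x^(2k+1)`; by the recurrence, the terms of
  -- `x² P' + x P` are those of `P'` shifted by one index and negated
  have hshift : ∀ k, x ^ 2 * b k + x * (arsinhCoeff k * x ^ (2 * k + 1)) = -b (k + 1) := by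
    intro k
    simp only [b]
    push_cast
    linear_combination x ^ (2 * k + 2) * arsinhCoeff_succ k
  calc (1 + x ^ 2) * ∑' k, b k + x * ∑' k, arsinhCoeff k * x ^ (2 * k + 1)
      = ∑' k, b k + ∑' k, (x ^ 2 * b k + x * (arsinhCoeff k * x ^ (2 * k + 1))) := by
        rw [(hb.mul_left _).tsum_add (hP.mul_left _), tsum_mul_left, tsum_mul_left]
        ring
    _ = b 0 := by rw [tsum_congr hshift, tsum_neg, hb.tsum_eq_zero_add]; ring
    _ = 1 := by simp [b, arsinhCoeff_zero]

theorem eqOn_sqrt_one_add_sq_mul_tsum_arsinh :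
    EqOn (fun x => √(1 + x ^ 2) * ∑' k, arsinhCoeff k * x ^ (2 * k + 1)) arsinh
      (Ioo (-1) 1) := by
  refine isOpen_Ioo.eqOn_of_hasDerivAt isPreconnected_Ioo (fun y hy => ?_)
    (fun y _ => hasDerivAt_arsinh y) (c := 0) (by norm_num) (by simp)
  have hy : |y| < 1 := abs_lt.2 hy
  refine ((hasDerivAt_sqrt_one_add_sq y).mul (hasDerivAt_tsum_mul_pow_comp abs_arsinhCoeff_le_one
    (injective_two_mul_add 1) hy)).congr_deriv ?_
  have hpos : 0 < √(1 + y ^ 2) := by positivity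
  have hsq : √(1 + y ^ 2) ^ 2 = 1 + y ^ 2 := sq_sqrt (by positivity)
  have hode := one_add_sq_mul_tsum_add_mul_tsum_eq_one hy
  simp only [Nat.add_sub_cancel, Nat.cast_add, Nat.cast_mul, Nat.cast_ofNat, Nat.cast_one]
  set B := ∑' k, arsinhCoeff k * ((2 * k + 1) * y ^ (2 * k))
  field_simp
  linear_combination hode + B * hsq

theorem eqOn_tsum_arsinh_sq :
    EqOn (fun x => ∑' k, arsinhCoeff k / (k + 1) * x ^ (2 * k + 2)) (fun x => arsinh x ^ 2)
      (Ioo (-1) 1) := by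
  refine isOpen_Ioo.eqOn_of_hasDerivAt isPreconnected_Ioo (fun y hy => ?_)
    (fun y _ => (hasDerivAt_arsinh y).fun_pow 2) (c := 0) (by norm_num) (by simp)
  refine (hasDerivAt_tsum_mul_pow_comp abs_arsinhCoeff_div_le_one (injective_two_mul_add 2)
    (abs_lt.2 hy)).congr_deriv ?_
  have hpos : 0 < √(1 + y ^ 2) := by positivity
  calc ∑' k, arsinhCoeff k / (k + 1) * ((2 * k + 2 : ℕ) * y ^ (2 * k + 2 - 1))
      = 2 * ∑' k, arsinhCoeff k * y ^ (2 * k + 1) := by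
        rw [← tsum_mul_left]
        refine tsum_congr fun k => ?_
        rw [Nat.add_sub_assoc one_le_two]
        push_cast
        field_simp
    _ = _ := by
        rw [← eqOn_sqrt_one_add_sq_mul_tsum_arsinh hy]
        field_simp
        ring

lemma arsinhCoeff_div_mul_integral_pow_mul_arccos (k : ℕ) :
    arsinhCoeff k / (k + 1) * ∫ x in (0 : ℝ)..1, x ^ (2 * k + 1) * arccos x =
      π / 8 * ((-1) ^ k / (k + 1) ^ 3) := by
  rw [integral_pow_mul_arccos, show 2 * k + 1 + 1 = 2 * (k + 1) by ring,
    integral_cos_pow_two_mul, arsinhCoeff, wallisProd_succ]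
  have hW := wallisProd_pos k
  push_cast
  field_simp
  ring

lemma summable_abs_arsinhCoeff_div_mul_integral_pow_mul_arccos :
    Summable fun k : ℕ =>
      |arsinhCoeff k / (k + 1)| * ∫ x in (0 : ℝ)..1, x ^ (2 * k + 1) * arccos x := by
  have hcubes : Summable fun k : ℕ => π / 8 * (1 / ((k : ℝ) + 1) ^ 3) :=
    ((summable_nat_add_iff 1).2 (summable_one_div_nat_pow (p := 3).2 (by norm_num))).mul_left
      (π / 8) |>.congr fun k => by push_cast; ring
  refine hcubes.congr fun k => ?_
  have hJ : 0 ≤ ∫ x in (0 : ℝ)..1, x ^ (2 * k + 1) * arccos x :=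
    intervalIntegral.integral_nonneg zero_le_one fun x hx =>
      mul_nonneg (pow_nonneg hx.1 _) (arccos_nonneg x)
  rw [← abs_of_nonneg hJ, ← abs_mul, arsinhCoeff_div_mul_integral_pow_mul_arccos]
  simp [abs_div, abs_of_pos pi_pos, abs_of_pos (by positivity : (0 : ℝ) < k + 1)]

lemma arsinh_sq_mul_arccos_div_eq_tsum {x : ℝ} (hx : x ∈ Icc (0 : ℝ) 1) :
    arsinh x ^ 2 * arccos x / x =
      ∑' k, arsinhCoeff k / (k + 1) * (x ^ (2 * k + 1) * arccos x) := by
  rcases hx.2.lt_or_eq with hx1 | rfl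
  · rcases hx.1.eq_or_lt with rfl | hx0
    · simp
    have h : ∑' k, arsinhCoeff k / (k + 1) * x ^ (2 * k + 2) = arsinh x ^ 2 :=
      eqOn_tsum_arsinh_sq ⟨by linarith, hx1⟩
    rw [mul_div_right_comm, ← h, ← tsum_div_const, ← tsum_mul_right]
    refine tsum_congr fun k => ?_
    field_simp
    ring
  · simp

open Real in
theorem alt_cubes_sum_eq_arsinh_sq_integral :
    (π / 8) * ∑' n : ℕ, (-1 : ℝ) ^ n / (n + 1 : ℝ) ^ 3 =
      ∫ x in (0:ℝ)..1, (arsinh x) ^ 2 * arccos x / x := by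
  calc (π / 8) * ∑' n : ℕ, (-1 : ℝ) ^ n / (n + 1 : ℝ) ^ 3
      = ∑' k, arsinhCoeff k / (k + 1) * ∫ x in (0 : ℝ)..1, x ^ (2 * k + 1) * arccos x := by
        rw [← tsum_mul_left]
        exact tsum_congr fun k => (arsinhCoeff_div_mul_integral_pow_mul_arccos k).symm
    _ = ∫ x in (0 : ℝ)..1, ∑' k, arsinhCoeff k / (k + 1) * (x ^ (2 * k + 1) * arccos x) :=
        (intervalIntegral.integral_tsum_mul_of_nonneg zero_le_one
          (fun k => (by fun_prop : Continuous _).intervalIntegrable _ _)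
          (fun k x hx => mul_nonneg (pow_nonneg hx.1.le _) (arccos_nonneg x))
          summable_abs_arsinhCoeff_div_mul_integral_pow_mul_arccos).symm
    _ = ∫ x in (0:ℝ)..1, (arsinh x) ^ 2 * arccos x / x :=
        intervalIntegral.integral_congr fun x hx =>
          (arsinh_sq_mul_arccos_div_eq_tsum (by rwa [uIcc_of_le zero_le_one] at hx)).symm
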